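/- arXiv:2510.26332 — 3 statements merged into one kernel-verified Lean document; each statement's English description precedes it below -/
import Mathlib

section
/- Let O be a discrete valuation ring with uniformizer π and fraction field K. For a ∈ O let g_a denote the matrix [[π, a], [0, 1]] ∈ GL₂(K), and let h denote the matrix [[1, 0], [0, π]] ∈ GL₂(K). Then: (i) the double coset GL₂(O)·g₀·GL₂(O) equals the union of the left cosets g_a·GL₂(O) for a ranging over O together with the left coset h·GL₂(O); (ii) for a, b ∈ O, one has g_a·GL₂(O) = g_b·GL₂(O) if and only if a ≡ b modulo πO; (iii) for every a ∈ O, g_a·GL₂(O) ≠ h·GL₂(O); and (iv) each of the cosets g_a·GL₂(O) and h·GL₂(O) is contained in the double coset GL₂(O)·g₀·GL₂(O). In particular, if the residue field O/πO is finite with q elements, the double coset is the disjoint union of exactly q + 1 left cosets. -/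
open scoped Pointwise
set_option synthInstance.maxHeartbeats 400000
set_option maxHeartbeats 1600000

/-- Decomposition of the double coset `GL₂(O)·[[π,0],[0,1]]·GL₂(O)` in `GL₂(K)`, for `O` a
discrete valuation ring with uniformizer `π` and fraction field `K`: it is the union of the
left cosets `[[π,a],[0,1]]·GL₂(O)` for `a ∈ O` together with `[[1,0],[0,π]]·GL₂(O)`; two
cosets `g_a GL₂(O)` and `g_b GL₂(O)` coincide iff `a ≡ b (mod π)`; no coset `g_a GL₂(O)`
equals `h·GL₂(O)`; and each of these cosets is contained in the double coset. -/
theorem hecke_Tv_coset_decomposition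
    {O K : Type*} [CommRing O] [IsDomain O] [IsDiscreteValuationRing O]
    [Field K] [Algebra O K] [IsFractionRing O K]
    (π : O) (hπ : Irreducible π)
    (Γ : Subgroup (Matrix (Fin 2) (Fin 2) K)ˣ)
    (hΓ : Γ = (Units.map ((algebraMap O K).mapMatrix).toMonoidHom).range)
    (ga : O → (Matrix (Fin 2) (Fin 2) K)ˣ)
    (hga : ∀ a : O, (ga a : Matrix (Fin 2) (Fin 2) K) =
      !![algebraMap O K π, algebraMap O K a; 0, 1])
    (h : (Matrix (Fin 2) (Fin 2) K)ˣ)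
    (hh : (h : Matrix (Fin 2) (Fin 2) K) = !![1, 0; 0, algebraMap O K π]) :
    ({x : (Matrix (Fin 2) (Fin 2) K)ˣ | ∃ u ∈ Γ, ∃ v ∈ Γ, x = u * ga 0 * v} =
        (⋃ a : O, ga a • (Γ : Set (Matrix (Fin 2) (Fin 2) K)ˣ)) ∪
          h • (Γ : Set (Matrix (Fin 2) (Fin 2) K)ˣ)) ∧
    (∀ a b : O, ga a • (Γ : Set (Matrix (Fin 2) (Fin 2) K)ˣ) =
        ga b • (Γ : Set (Matrix (Fin 2) (Fin 2) K)ˣ) ↔ π ∣ (a - b)) ∧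
    (∀ a : O, ga a • (Γ : Set (Matrix (Fin 2) (Fin 2) K)ˣ) ≠
        h • (Γ : Set (Matrix (Fin 2) (Fin 2) K)ˣ)) ∧
    (∀ a : O, ga a • (Γ : Set (Matrix (Fin 2) (Fin 2) K)ˣ) ⊆
        {x : (Matrix (Fin 2) (Fin 2) K)ˣ | ∃ u ∈ Γ, ∃ v ∈ Γ, x = u * ga 0 * v}) ∧
    (h • (Γ : Set (Matrix (Fin 2) (Fin 2) K)ˣ) ⊆
        {x : (Matrix (Fin 2) (Fin 2) K)ˣ | ∃ u ∈ Γ, ∃ v ∈ Γ, x = u * ga 0 * v}) := by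
  have inj : Function.Injective (algebraMap O K) := IsFractionRing.injective O K
  set φ : O →+* K := algebraMap O K with hφ
  set f : Matrix (Fin 2) (Fin 2) O →* Matrix (Fin 2) (Fin 2) K :=
    ((algebraMap O K).mapMatrix).toMonoidHom with hf
  -- mapping explicit 2×2 matrices
  have mapfin : ∀ a b c d : O, (!![a, b; c, d]).map φ = !![φ a, φ b; φ c, φ d] := by
    intro a b c d
    ext i j
    fin_cases i <;> fin_cases j <;> simp [Matrix.map_apply]
  -- membership in Γ from an O-matrix with unit determinant
  have ofO : ∀ A : Matrix (Fin 2) (Fin 2) O, IsUnit A.det →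
      ∀ u : (Matrix (Fin 2) (Fin 2) K)ˣ, (u : Matrix (Fin 2) (Fin 2) K) = A.map φ →
      u ∈ Γ := by
    intro A hA u hu
    obtain ⟨U, hU⟩ := (Matrix.isUnit_iff_isUnit_det A).mpr hA
    rw [hΓ]
    exact ⟨U, Units.ext (by simpa [hf, RingHom.mapMatrix_apply, hU] using hu.symm)⟩
  -- every element of Γ comes from an O-matrix with unit determinant
  have toO : ∀ u : (Matrix (Fin 2) (Fin 2) K)ˣ, u ∈ Γ →
      ∃ A : Matrix (Fin 2) (Fin 2) O, IsUnit A.det ∧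
        (u : Matrix (Fin 2) (Fin 2) K) = A.map φ := by
    intro u hu
    rw [hΓ] at hu
    obtain ⟨U, hU⟩ := hu
    refine ⟨U.val, (Matrix.isUnit_iff_isUnit_det _).mp U.isUnit, ?_⟩
    rw [← hU]
    simp [hf, RingHom.mapMatrix_apply, hφ]
  -- in a DVR, every element is a multiple of π or a unit
  have dvd_or_unit : ∀ s : O, π ∣ s ∨ IsUnit s := by
    intro s
    by_cases hs : IsUnit s
    · exact Or.inr hs
    · left
      have hmem : s ∈ IsLocalRing.maximalIdeal O :=
        (IsLocalRing.mem_maximalIdeal s).mpr hs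
      rw [(IsDiscreteValuationRing.irreducible_iff_uniformizer π).mp hπ,
        Ideal.mem_span_singleton] at hmem
      exact hmem
  -- multiplying a coset by an element of Γ
  have smul_coe : ∀ γ : (Matrix (Fin 2) (Fin 2) K)ˣ, γ ∈ Γ →
      γ • (Γ : Set (Matrix (Fin 2) (Fin 2) K)ˣ) = Γ := by
    intro γ hγ
    ext x
    simp only [Set.mem_smul_set_iff_inv_smul_mem, smul_eq_mul, SetLike.mem_coe]
    constructor
    · intro hx
      have := mul_mem hγ hx
      simpa using this
    · intro hx
      exact mul_mem (inv_mem hγ) hx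
  -- part 4 : each ga a coset is in the double coset
  have part4 : ∀ a : O, ga a • (Γ : Set (Matrix (Fin 2) (Fin 2) K)ˣ) ⊆
      {x : (Matrix (Fin 2) (Fin 2) K)ˣ | ∃ u ∈ Γ, ∃ v ∈ Γ, x = u * ga 0 * v} := by
    intro a x hx
    obtain ⟨γ, hγ, rfl⟩ := hx
    obtain ⟨UE, hUE⟩ := (Matrix.isUnit_iff_isUnit_det !![(1 : O), a; 0, 1]).mpr
      (by simp [Matrix.det_fin_two_of])
    set E : (Matrix (Fin 2) (Fin 2) K)ˣ := Units.map f UE with hE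
    have hEmem : E ∈ Γ := by rw [hΓ]; exact ⟨UE, rfl⟩
    have hEval : (E : Matrix (Fin 2) (Fin 2) K) = !![1, φ a; 0, 1] := by
      have : (E : Matrix (Fin 2) (Fin 2) K) = (!![(1 : O), a; 0, 1]).map φ := by
        simp [hE, hf, RingHom.mapMatrix_apply, hUE, hφ]
      rw [this, mapfin]
      simp
    refine ⟨E, hEmem, γ, SetLike.mem_coe.mp hγ, ?_⟩
    have key : ga a = E * ga 0 := by
      apply Units.ext
      rw [Units.val_mul, hga, hga, hEval]
      simp [Matrix.mul_fin_two]
    show ga a * γ = E * ga 0 * γ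
    rw [key, mul_assoc]
  -- part 5 : the h coset is in the double coset
  have part5 : h • (Γ : Set (Matrix (Fin 2) (Fin 2) K)ˣ) ⊆
      {x : (Matrix (Fin 2) (Fin 2) K)ˣ | ∃ u ∈ Γ, ∃ v ∈ Γ, x = u * ga 0 * v} := by
    intro x hx
    obtain ⟨γ, hγ, rfl⟩ := hx
    obtain ⟨US, hUS⟩ := (Matrix.isUnit_iff_isUnit_det !![(0 : O), 1; 1, 0]).mpr
      (by simp [Matrix.det_fin_two_of])
    set S : (Matrix (Fin 2) (Fin 2) K)ˣ := Units.map f US with hS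
    have hSmem : S ∈ Γ := by rw [hΓ]; exact ⟨US, rfl⟩
    have hSval : (S : Matrix (Fin 2) (Fin 2) K) = !![0, 1; 1, 0] := by
      have : (S : Matrix (Fin 2) (Fin 2) K) = (!![(0 : O), 1; 1, 0]).map φ := by
        simp [hS, hf, RingHom.mapMatrix_apply, hUS, hφ]
      rw [this, mapfin]
      simp
    refine ⟨S, hSmem, S * γ, mul_mem hSmem (SetLike.mem_coe.mp hγ), ?_⟩
    have key : h = S * ga 0 * S := by
      apply Units.ext
      rw [Units.val_mul, Units.val_mul, hga, hSval, hh]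
      simp [Matrix.mul_fin_two]
    show h * γ = S * ga 0 * (S * γ)
    rw [key]
    group
  -- part 2 : coset equality criterion
  have part2 : ∀ a b : O, ga a • (Γ : Set (Matrix (Fin 2) (Fin 2) K)ˣ) =
      ga b • (Γ : Set (Matrix (Fin 2) (Fin 2) K)ˣ) ↔ π ∣ (a - b) := by
    intro a b
    constructor
    · intro hEq
      have hmem : ga b ∈ ga a • (Γ : Set (Matrix (Fin 2) (Fin 2) K)ˣ) := by
        rw [hEq]
        exact ⟨1, SetLike.mem_coe.mpr (one_mem Γ), mul_one _⟩
      obtain ⟨γ, hγ, hmul0⟩ := hmem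
      have hmul : ga a * γ = ga b := hmul0
      obtain ⟨A, hAdet, hAval⟩ := toO γ (SetLike.mem_coe.mp hγ)
      have hmat : !![φ π, φ a; 0, 1] * !![φ (A 0 0), φ (A 0 1); φ (A 1 0), φ (A 1 1)] =
          !![φ π, φ b; 0, 1] := by
        have := congrArg (Units.val) hmul
        rw [Units.val_mul, hga, hga, hAval, Matrix.eta_fin_two A, mapfin] at this
        exact this
      rw [Matrix.mul_fin_two] at hmat
      have e01 : φ π * φ (A 0 1) + φ a * φ (A 1 1) = φ b := congrFun (congrFun hmat 0) 1
      have e11 : φ (A 1 1) = 1 := by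
        have := congrFun (congrFun hmat 1) 1
        simpa using this
      have hs1 : A 1 1 = 1 := inj (by rw [e11, map_one])
      have hb : π * A 0 1 + a * A 1 1 = b := inj (by push_cast [map_add, map_mul]; exact e01)
      refine ⟨-(A 0 1), ?_⟩
      rw [hs1, mul_one] at hb
      linear_combination hb
    · rintro ⟨c, hc⟩
      obtain ⟨UW, hUW⟩ := (Matrix.isUnit_iff_isUnit_det !![(1 : O), -c; 0, 1]).mpr
        (by simp [Matrix.det_fin_two_of])
      set W : (Matrix (Fin 2) (Fin 2) K)ˣ := Units.map f UW with hW
      have hWmem : W ∈ Γ := by rw [hΓ]; exact ⟨UW, rfl⟩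
      have hWval : (W : Matrix (Fin 2) (Fin 2) K) = !![1, φ (-c); 0, 1] := by
        have : (W : Matrix (Fin 2) (Fin 2) K) = (!![(1 : O), -c; 0, 1]).map φ := by
          simp [hW, hf, RingHom.mapMatrix_apply, hUW, hφ]
        rw [this, mapfin]
        simp
      have key : ga b = ga a * W := by
        apply Units.ext
        rw [Units.val_mul, hga, hga, hWval, Matrix.mul_fin_two]
        have e : φ π * φ (-c) + φ a = φ b := by
          rw [← map_mul, ← map_add]
          exact congrArg φ (by linear_combination hc)
        simp only [mul_one, mul_zero, zero_mul, add_zero, zero_add, one_mul, e]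
      rw [key, mul_smul, smul_coe W hWmem]
  -- part 3 : the ga cosets differ from the h coset
  have part3 : ∀ a : O, ga a • (Γ : Set (Matrix (Fin 2) (Fin 2) K)ˣ) ≠
      h • (Γ : Set (Matrix (Fin 2) (Fin 2) K)ˣ) := by
    intro a hEq
    have hmem : h ∈ ga a • (Γ : Set (Matrix (Fin 2) (Fin 2) K)ˣ) := by
      rw [hEq]
      exact ⟨1, SetLike.mem_coe.mpr (one_mem Γ), mul_one _⟩
    obtain ⟨γ, hγ, hmul0⟩ := hmem
    have hmul : ga a * γ = h := hmul0
    obtain ⟨A, hAdet, hAval⟩ := toO γ (SetLike.mem_coe.mp hγ)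
    have hmat : !![φ π, φ a; 0, 1] * !![φ (A 0 0), φ (A 0 1); φ (A 1 0), φ (A 1 1)] =
        !![1, 0; 0, φ π] := by
      have := congrArg (Units.val) hmul
      rw [Units.val_mul, hga, hh, hAval, Matrix.eta_fin_two A, mapfin] at this
      exact this
    rw [Matrix.mul_fin_two] at hmat
    have e00 : φ π * φ (A 0 0) + φ a * φ (A 1 0) = 1 := congrFun (congrFun hmat 0) 0
    have e10 : φ (A 1 0) = 0 := by
      have := congrFun (congrFun hmat 1) 0
      simpa using this
    have hr0 : A 1 0 = 0 := inj (by rw [e10, map_zero])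
    have h1 : π * A 0 0 + a * A 1 0 = 1 := by
      apply inj
      rw [map_add, map_mul, map_mul, map_one]
      exact e00
    rw [hr0, mul_zero, add_zero] at h1
    exact hπ.not_isUnit (IsUnit.of_mul_eq_one (A 0 0) h1)
  refine ⟨?_, part2, part3, part4, part5⟩
  ext x
  constructor
  · rintro ⟨u, hu, v, hv, rfl⟩
    obtain ⟨A, hAdet, hAval⟩ := toO u hu
    set p := A 0 0 with hp
    set q := A 0 1 with hq
    set r := A 1 0 with hr
    set s := A 1 1 with hs
    have hdet : IsUnit (p * s - q * r) := by
      rwa [Matrix.eta_fin_two A, Matrix.det_fin_two_of] at hAdet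
    have hAval' : (u : Matrix (Fin 2) (Fin 2) K) = !![φ p, φ q; φ r, φ s] := by
      rw [hAval, Matrix.eta_fin_two A, mapfin]
    rcases dvd_or_unit s with ⟨s₁, hs₁⟩ | hsu
    · -- π ∣ s : land in the h coset
      right
      set M : Matrix (Fin 2) (Fin 2) O := !![π * p, q; r, s₁] with hM
      have hMdet : IsUnit M.det := by
        have : M.det = p * s - q * r := by
          rw [hM, Matrix.det_fin_two_of]
          linear_combination (-p) * hs₁
        rwa [this]
      obtain ⟨m, hm⟩ := (Matrix.isUnit_iff_isUnit_det M).mpr hMdet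
      set γ₀ : (Matrix (Fin 2) (Fin 2) K)ˣ := Units.map f m with hγ₀
      have hγ₀mem : γ₀ ∈ Γ := by rw [hΓ]; exact ⟨m, rfl⟩
      have hγ₀val : (γ₀ : Matrix (Fin 2) (Fin 2) K) = !![φ (π * p), φ q; φ r, φ s₁] := by
        have : (γ₀ : Matrix (Fin 2) (Fin 2) K) = M.map φ := by
          simp [hγ₀, hf, RingHom.mapMatrix_apply, hm, hφ]
        rw [this, hM, mapfin]
      refine ⟨γ₀ * v, mul_mem hγ₀mem hv, ?_⟩
      have key : h * γ₀ = u * ga 0 := by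
        apply Units.ext
        rw [Units.val_mul, Units.val_mul, hh, hγ₀val, hAval', hga, Matrix.mul_fin_two,
          Matrix.mul_fin_two]
        have hss : φ π * φ s₁ = φ s := by rw [← map_mul, ← hs₁]
        ext i j
        fin_cases i <;> fin_cases j <;> simp [map_mul, hss] <;> ring
      show h * (γ₀ * v) = u * ga 0 * v
      rw [← mul_assoc, key]
    · -- s is a unit : land in a ga coset
      left
      set t : O := ↑hsu.unit⁻¹ with ht
      set a : O := q * t with ha
      have hts : t * s = 1 := by
        rw [ht]
        nth_rewrite 2 [← IsUnit.unit_spec hsu]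
        exact Units.inv_mul _
      have has : a * s = q := by rw [ha, mul_assoc, hts, mul_one]
      rw [Set.mem_iUnion]
      refine ⟨a, ?_⟩
      set M : Matrix (Fin 2) (Fin 2) O := !![p - a * r, 0; r * π, s] with hM
      have hMdet : IsUnit M.det := by
        have : M.det = p * s - q * r := by
          rw [hM, Matrix.det_fin_two_of]
          linear_combination (-r) * has
        rwa [this]
      obtain ⟨m, hm⟩ := (Matrix.isUnit_iff_isUnit_det M).mpr hMdet
      set γ₀ : (Matrix (Fin 2) (Fin 2) K)ˣ := Units.map f m with hγ₀
      have hγ₀mem : γ₀ ∈ Γ := by rw [hΓ]; exact ⟨m, rfl⟩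
      have hγ₀val : (γ₀ : Matrix (Fin 2) (Fin 2) K) =
          !![φ (p - a * r), 0; φ (r * π), φ s] := by
        have : (γ₀ : Matrix (Fin 2) (Fin 2) K) = M.map φ := by
          simp [hγ₀, hf, RingHom.mapMatrix_apply, hm, hφ]
        rw [this, hM, mapfin, map_zero]
      refine ⟨γ₀ * v, SetLike.mem_coe.mpr (mul_mem hγ₀mem hv), ?_⟩
      have key : ga a * γ₀ = u * ga 0 := by
        apply Units.ext
        rw [Units.val_mul, Units.val_mul, hga, hγ₀val, hAval', hga, Matrix.mul_fin_two,
          Matrix.mul_fin_two]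
        have hasφ : φ a * φ s = φ q := by rw [← map_mul, has]
        ext i j
        fin_cases i <;> fin_cases j <;> simp [map_sub, map_mul, hasφ] <;> ring
      show ga a * (γ₀ * v) = u * ga 0 * v
      rw [← mul_assoc, key]
  · rintro (hx | hx)
    · rw [Set.mem_iUnion] at hx
      obtain ⟨a, hx⟩ := hx
      exact part4 a hx
    · exact part5 hx
end

section
/- For every ℝ-algebra homomorphism f : ℂ → M₂(ℝ), there exists a unique complex number z with Im z ≠ 0 such that, regarding the real matrix f(i) as acting ℂ-linearly on ℂ², one has f(i)·(z, 1)ᵗ = (i·z, i)ᵗ, i.e. the column vector (z, 1)ᵗ is an eigenvector of f(i) with eigenvalue i. -/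
/-- For every `ℝ`-algebra homomorphism `f : ℂ → M₂(ℝ)` there is a unique `z ∈ ℂ ∖ ℝ` such
that the column vector `(z, 1)ᵗ` is an eigenvector of `f(i)` (acting `ℂ`-linearly on `ℂ²`)
with eigenvalue `i`. -/
theorem exists_unique_fixed_point_of_algHom_complex_matrix
    (f : ℂ →ₐ[ℝ] Matrix (Fin 2) (Fin 2) ℝ) :
    ∃! z : ℂ, z.im ≠ 0 ∧
      ((f Complex.I).map (fun r : ℝ => (r : ℂ))).mulVec ![z, 1] =
        ![Complex.I * z, Complex.I] := by
  set a : ℝ := f Complex.I 0 0 with ha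
  set b : ℝ := f Complex.I 0 1 with hb
  set c : ℝ := f Complex.I 1 0 with hc
  set d : ℝ := f Complex.I 1 1 with hd
  have hsq : f Complex.I * f Complex.I = -1 := by
    rw [← map_mul, Complex.I_mul_I, map_neg, map_one]
  have h00 : a * a + b * c = -1 := by
    have := congrFun (congrFun hsq 0) 0
    simpa [Matrix.mul_apply, Fin.sum_univ_two, ← ha, ← hb, ← hc, ← hd] using this
  have h10 : c * a + d * c = 0 := by
    have := congrFun (congrFun hsq 1) 0
    simpa [Matrix.mul_apply, Fin.sum_univ_two, ← ha, ← hc, ← hd] using this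
  have hcne : c ≠ 0 := by
    intro h
    rw [h, mul_zero, add_zero] at h00
    nlinarith [sq_nonneg a]
  have had : d = -a := by
    have h : c * (a + d) = 0 := by ring_nf; linarith [h10]
    rcases mul_eq_zero.mp h with h | h
    · exact absurd h hcne
    · linarith
  have hcC : (c : ℂ) ≠ 0 := by exact_mod_cast hcne
  have h00C : (a : ℂ) * a + (b : ℂ) * c = -1 := by exact_mod_cast h00
  have hadC : (d : ℂ) = -(a : ℂ) := by exact_mod_cast had
  refine ⟨(Complex.I - (d : ℂ)) / (c : ℂ), ⟨?_, ?_⟩, ?_⟩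
  · simp [Complex.div_im, Complex.normSq_apply]
    intro h
    exact absurd (by nlinarith [h] : c = 0) hcne
  · funext i
    fin_cases i <;>
      simp only [Matrix.mulVec, dotProduct, Fin.sum_univ_two, Matrix.map_apply,
        Matrix.cons_val_zero, Matrix.cons_val_one, Matrix.head_cons, ← ha, ← hb, ← hc, ← hd,
        Fin.isValue, mul_one, Fin.zero_eta, Fin.mk_one]
    · field_simp
      linear_combination h00C + (Complex.I - (a : ℂ)) * hadC - Complex.I_sq
    · field_simp
      ring
  · rintro z ⟨-, hz⟩
    have h1 := congrFun hz 1
    simp only [Matrix.mulVec, dotProduct, Fin.sum_univ_two, Matrix.map_apply,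
      Matrix.cons_val_zero, Matrix.cons_val_one, Matrix.head_cons, ← hc, ← hd,
      Fin.isValue, mul_one] at h1
    field_simp
    linear_combination h1
end

section
/- Let f : ℂ → M₂(ℝ) be an ℝ-algebra homomorphism and let z ∈ ℂ with Im z ≠ 0 satisfy f(i)·(z, 1)ᵗ = (i·z, i)ᵗ, where f(i) acts ℂ-linearly on ℂ². Let g = [[a, b], [c, d]] ∈ GL₂(ℝ). Then cz + d ≠ 0, the number w := (az + b)/(cz + d) satisfies Im w ≠ 0, and the conjugated ℝ-algebra homomorphism f^g : ℂ → M₂(ℝ) defined by f^g(x) = g·f(x)·g⁻¹ satisfies f^g(i)·(w, 1)ᵗ = (i·w, i)ᵗ. In other words, the identification f ↦ z between ℝ-algebra homomorphisms ℂ → M₂(ℝ) and points of ℂ∖ℝ is equivariant for the conjugation action of GL₂(ℝ) on homomorphisms and the fractional linear transformation action g·z = (az + b)/(cz + d) on ℂ∖ℝ. -/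
/-- The identification `f ↦ z` between `ℝ`-algebra homomorphisms `ℂ → M₂(ℝ)` and points of
`ℂ ∖ ℝ` is `GL₂(ℝ)`-equivariant: if `(z,1)ᵗ` is an `i`-eigenvector of `f(i)` with
`Im z ≠ 0`, and `g = [[a,b],[c,d]] ∈ GL₂(ℝ)`, then `cz + d ≠ 0`, the point
`w = (az+b)/(cz+d)` has `Im w ≠ 0`, and `(w,1)ᵗ` is an `i`-eigenvector of `(gf(i)g⁻¹)`. -/
theorem algHom_complex_matrix_equivariant
    (f : ℂ →ₐ[ℝ] Matrix (Fin 2) (Fin 2) ℝ) (z : ℂ) (hz : z.im ≠ 0)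
    (hfz : ((f Complex.I).map (fun r : ℝ => (r : ℂ))).mulVec ![z, 1] =
      ![Complex.I * z, Complex.I])
    (g : (Matrix (Fin 2) (Fin 2) ℝ)ˣ) (w : ℂ)
    (hw : w = (((g : Matrix (Fin 2) (Fin 2) ℝ) 0 0 : ℂ) * z +
        ((g : Matrix (Fin 2) (Fin 2) ℝ) 0 1 : ℂ)) /
      (((g : Matrix (Fin 2) (Fin 2) ℝ) 1 0 : ℂ) * z +
        ((g : Matrix (Fin 2) (Fin 2) ℝ) 1 1 : ℂ))) :
    (((g : Matrix (Fin 2) (Fin 2) ℝ) 1 0 : ℂ) * z +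
        ((g : Matrix (Fin 2) (Fin 2) ℝ) 1 1 : ℂ) ≠ 0) ∧
    w.im ≠ 0 ∧
    ((((g : Matrix (Fin 2) (Fin 2) ℝ) * f Complex.I *
          ((g⁻¹ : (Matrix (Fin 2) (Fin 2) ℝ)ˣ) : Matrix (Fin 2) (Fin 2) ℝ)).map
        (fun r : ℝ => (r : ℂ))).mulVec ![w, 1] = ![Complex.I * w, Complex.I]) := by
  set a := (g : Matrix (Fin 2) (Fin 2) ℝ) 0 0 with ha
  set b := (g : Matrix (Fin 2) (Fin 2) ℝ) 0 1 with hb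
  set c := (g : Matrix (Fin 2) (Fin 2) ℝ) 1 0 with hc
  set d := (g : Matrix (Fin 2) (Fin 2) ℝ) 1 1 with hd
  have hdetU : IsUnit ((g : Matrix (Fin 2) (Fin 2) ℝ).det) :=
    (Matrix.isUnit_iff_isUnit_det _).mp g.isUnit
  rw [Matrix.det_fin_two] at hdetU
  have hdet : a * d - b * c ≠ 0 := isUnit_iff_ne_zero.mp hdetU
  set N : ℂ := (a : ℂ) * z + (b : ℂ) with hN
  set D : ℂ := (c : ℂ) * z + (d : ℂ) with hD
  have hDne : D ≠ 0 := by
    intro h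
    have h1 : c * z.im = 0 := by
      have := congrArg Complex.im h
      simpa [hD] using this
    have hc0 : c = 0 := by
      rcases mul_eq_zero.mp h1 with h' | h'
      · exact h'
      · exact absurd h' hz
    have hd0 : d = 0 := by
      have := congrArg Complex.re h
      simp [hD, hc0] at this
      exact_mod_cast this
    exact hdet (by rw [hc0, hd0]; ring)
  refine ⟨hDne, ?_, ?_⟩
  · have hnsq : Complex.normSq D ≠ 0 := fun h => hDne (Complex.normSq_eq_zero.mp h)
    have him : w.im * Complex.normSq D = (a * d - b * c) * z.im := by
      rw [hw, Complex.div_im]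
      have hNre : N.re = a * z.re + b := by simp [hN]
      have hNim : N.im = a * z.im := by simp [hN]
      have hDre : D.re = c * z.re + d := by simp [hD]
      have hDim : D.im = c * z.im := by simp [hD]
      field_simp [hNre, hNim, hDre, hDim]
      simp only [hNre, hNim, hDre, hDim]
      ring
    intro h0
    rw [h0, zero_mul] at him
    rcases mul_eq_zero.mp him.symm with h' | h'
    · exact hdet h'
    · exact hz h'
  · set G : Matrix (Fin 2) (Fin 2) ℂ :=
      ((g : Matrix (Fin 2) (Fin 2) ℝ)).map (fun r : ℝ => (r : ℂ)) with hG
    set Gi : Matrix (Fin 2) (Fin 2) ℂ :=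
      (((g⁻¹ : (Matrix (Fin 2) (Fin 2) ℝ)ˣ) : Matrix (Fin 2) (Fin 2) ℝ)).map
        (fun r : ℝ => (r : ℂ)) with hGi
    set F : Matrix (Fin 2) (Fin 2) ℂ :=
      (f Complex.I).map (fun r : ℝ => (r : ℂ)) with hF
    have hcoe : (fun r : ℝ => (r : ℂ)) = ⇑Complex.ofRealHom := rfl
    have hmap : (((g : Matrix (Fin 2) (Fin 2) ℝ) * f Complex.I *
          ((g⁻¹ : (Matrix (Fin 2) (Fin 2) ℝ)ˣ) : Matrix (Fin 2) (Fin 2) ℝ)).map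
        (fun r : ℝ => (r : ℂ))) = G * F * Gi := by
      rw [hcoe, Matrix.map_mul, Matrix.map_mul]; rfl
    have hGiG : Gi * G = 1 := by
      rw [hGi, hG, hcoe, ← Matrix.map_mul]
      norm_cast
      rw [inv_mul_cancel g]
      simp
    have hGv : G.mulVec ![z, 1] = ![N, D] := by
      funext i
      fin_cases i <;>
        simp [hG, Matrix.mulVec, dotProduct, Fin.sum_univ_two, hN, hD, ← ha, ← hb, ← hc, ← hd]
    have hwv : ![w, 1] = D⁻¹ • ![N, D] := by
      funext i
      fin_cases i <;> simp [hw, hN, hD, smul_eq_mul]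
      · rw [div_eq_inv_mul]
      · rw [inv_mul_cancel₀ hDne]
    have hred : G * F * Gi * G = G * F := by
      rw [Matrix.mul_assoc (G * F), hGiG, Matrix.mul_one]
    rw [hmap, hwv, Matrix.mulVec_smul, ← hGv, Matrix.mulVec_mulVec, hred,
      ← Matrix.mulVec_mulVec]
    have : F.mulVec ![z, 1] = Complex.I • ![z, 1] := by
      rw [hfz]
      funext i; fin_cases i <;> simp [smul_eq_mul]
    rw [this, Matrix.mulVec_smul, hGv, smul_comm]
    funext i; fin_cases i <;> simp [smul_eq_mul, hw]
    · rw [div_eq_inv_mul]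
    · exact inv_mul_cancel₀ hDne
end
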